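/- With F, K = F(a^{1/p}), J, J_1 as in Kummer theory for a degree-p cyclic extension with ξ_p ∈ F: the map J_1 → ⟨[a]⟩ ⊆ F^×/(F^×)^p induced by the norm N : K^× → F^× is surjective if and only if ξ_p ∈ N(K^×). -/

import Mathlib

noncomputable section

namespace KummerSetup

variable (p : ℕ) (F K : Type) [Field F] [Field K] [Algebra F K]

/-- The subgroup of `p`-th powers in `Kˣ`. -/
def powSub : Subgroup Kˣ := (powMonoidHom p : Kˣ →* Kˣ).range

/-- `J = Kˣ/(Kˣ)^p`. -/
abbrev Jgrp := Kˣ ⧸ powSub p K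

/-- The class of a unit in `J`. -/
def mkJ : Kˣ →* Jgrp p K := QuotientGroup.mk' (powSub p K)

/-- Action of an `F`-automorphism of `K` on units. -/
def galU (τ : K ≃ₐ[F] K) : Kˣ →* Kˣ := Units.map (τ.toAlgHom.toRingHom.toMonoidHom)

lemma powSub_le (τ : K ≃ₐ[F] K) : powSub p K ≤ (powSub p K).comap (galU F K τ) := by
  rintro x ⟨y, rfl⟩
  exact ⟨galU F K τ y, by simp [powMonoidHom, map_pow]⟩

/-- The induced action of an `F`-automorphism of `K` on `J = Kˣ/(Kˣ)^p`. -/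
def galJ (τ : K ≃ₐ[F] K) : Jgrp p K →* Jgrp p K :=
  QuotientGroup.map _ _ (galU F K τ) (powSub_le p F K τ)

/-- The subgroup `J^G` of `J` fixed by all of `Gal(K/F)`. -/
def fixedJ : Subgroup (Jgrp p K) where
  carrier := {x | ∀ τ : K ≃ₐ[F] K, galJ p F K τ x = x}
  one_mem' := fun τ => map_one _
  mul_mem' := by intro a b ha hb τ; rw [map_mul, ha τ, hb τ]
  inv_mem' := by intro a ha τ; rw [map_inv, ha τ]

/-- The norm on units, `N : Kˣ →* Fˣ`. -/
def normU : Kˣ →* Fˣ := Units.map (Algebra.norm F : K →* F)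

/-- The natural map `Fˣ →* Kˣ`. -/
def incU : Fˣ →* Kˣ := Units.map (algebraMap F K).toMonoidHom

/-- `ε : Fˣ →* J`, with image `ε(F^×) = F^×·(K^×)^p/(K^×)^p`. -/
def epsF : Fˣ →* Jgrp p K := (mkJ p K).comp (incU F K)

/-- `F^×/(F^×)^p`. -/
abbrev QF := Fˣ ⧸ powSub p F

/-- The map `F^×/(F^×)^p → J` induced by `F ⊆ K`. -/
def epsQ : QF p F →* Jgrp p K :=
  QuotientGroup.map _ _ (incU F K) (by rintro x ⟨y, rfl⟩; exact ⟨incU F K y, by simp [powMonoidHom, map_pow]⟩)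

/-- The map `J → F^×/(F^×)^p` induced by the norm. -/
def normJ : Jgrp p K →* QF p F :=
  QuotientGroup.map _ _ (normU F K) (by rintro x ⟨y, rfl⟩; exact ⟨normU F K y, by simp [powMonoidHom, map_pow]⟩)

/-- The cyclic `𝔽_p[G]`-submodule `M_γ` of `J` generated by the class of `γ`:
the subgroup generated by the `σ`-orbit of `[γ]`. -/
def Mgam (σ : K ≃ₐ[F] K) (γ : Kˣ) : Subgroup (Jgrp p K) :=
  Subgroup.closure {x | ∃ k : ℕ, (galJ p F K (σ ^ k)) (mkJ p K γ) = x}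

end KummerSetup

end

open KummerSetup Finset

/-! Write `N_n v = ∏_{i<n} σⁱ v` (`orbitProd`) and `D v = ∏_{i<p} N_i v` (`hilbert90Prod`), so that
`σ (D v) · v^p = D v · N v`: this is the explicit solution of Hilbert 90 for `⟨σ⟩ = Gal(K/F)`.
A class `[γ] ∈ J` is Galois-fixed iff `σ γ = γ k^p` for some `k`, and then `N γ = (γ · D k)^p`.

If `N γ ≡ a = α^p` modulo `(F^×)^p`, then `γ · D k / α` is an element of `F^×` times a `p`-th root
of unity, so it is fixed by `σ`; as `σ (γ · D k) = γ · D k · N k` and `σ α = ξ α`, this forces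
`N k = ξ`. Conversely, if `N u = ξ`, then `γ = α⁻¹ · D u` satisfies `σ γ = γ u^{-p}` and
`N γ = (γ · D u⁻¹)^p = α^{-p} = a⁻¹`. -/

section OrbitProduct

variable {M : Type*} [CommMonoid M] (f : M →* M)

def orbitProd (n : ℕ) (v : M) : M := ∏ i ∈ range n, f^[i] v

def hilbert90Prod (n : ℕ) (v : M) : M := ∏ i ∈ range n, orbitProd f i v

theorem map_orbitProd_mul (n : ℕ) (v : M) : f (orbitProd f n v) * v = orbitProd f (n + 1) v := by
  simp only [orbitProd, map_prod, prod_range_succ' _ n, Function.iterate_zero_apply,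
    ← Function.iterate_succ_apply' f]

theorem map_hilbert90Prod_mul_pow (n : ℕ) (v : M) :
    f (hilbert90Prod f n v) * v ^ n = hilbert90Prod f n v * orbitProd f n v := by
  have hv : v ^ n = ∏ _i ∈ range n, v := by rw [prod_const, card_range]
  rw [hilbert90Prod, map_prod, hv, ← prod_mul_distrib]
  simp only [map_orbitProd_mul]
  rw [← prod_range_succ, prod_range_succ']
  simp [orbitProd]

theorem iterate_eq_mul_pow_orbitProd {p : ℕ} {γ k : M} (h : f γ = γ * k ^ p) (i : ℕ) :
    f^[i] γ = γ * orbitProd f i k ^ p := by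
  induction i with
  | zero => simp [orbitProd]
  | succ i ih =>
    rw [Function.iterate_succ_apply', ih, map_mul, h, map_pow, ← map_orbitProd_mul, mul_pow,
      mul_assoc, mul_comm (k ^ p)]

theorem orbitProd_eq_of_map_eq_mul_pow {p : ℕ} {γ k : M} (h : f γ = γ * k ^ p) (n : ℕ) :
    orbitProd f n γ = γ ^ n * hilbert90Prod f n k ^ p := by
  rw [orbitProd, prod_congr rfl fun i _ => iterate_eq_mul_pow_orbitProd f h i, prod_mul_distrib,
    prod_const, card_range, hilbert90Prod, prod_pow]

theorem map_mul_hilbert90Prod_eq {n : ℕ} {γ k : M} (hγ : f γ = γ * k ^ n) :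
    f (γ * hilbert90Prod f n k) = γ * hilbert90Prod f n k * orbitProd f n k := by
  have h := map_hilbert90Prod_mul_pow f n k
  rw [map_mul, hγ, mul_assoc, mul_assoc, ← h, mul_comm (k ^ n)]

end OrbitProduct

theorem prod_univ_eq_prod_range_pow {G M : Type*} [Group G] [Fintype G] [CommMonoid M] {g : G}
    (hg : ∀ x, x ∈ Submonoid.powers g) (φ : G → M) :
    ∏ x, φ x = ∏ i ∈ range (Nat.card G), φ (g ^ i) := by
  classical
  have hz : ∀ x, x ∈ Subgroup.zpowers g := fun x => Submonoid.powers_le_zpowers g (hg x)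
  rw [← IsCyclic.image_range_card hz, prod_image]
  rw [← orderOf_eq_card_of_forall_mem_zpowers hz]
  exact fun i hi j hj => pow_injOn_Iio_orderOf (by simpa using hi) (by simpa using hj)

section CommGroup

variable {G : Type*} [CommGroup G] (f : G →* G) {n : ℕ}

theorem hilbert90Prod_inv (v : G) : hilbert90Prod f n v⁻¹ = (hilbert90Prod f n v)⁻¹ := by
  simp only [hilbert90Prod, orbitProd, iterate_map_inv, prod_inv_distrib]

theorem orbitProd_eq_of_orbitProd_mul_pow_eq_pow (hfix : ∀ x, x ^ n = 1 → f x = x)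
    {α ξ c γ k : G} (hα : f α = ξ * α) (hc : f c = c) (hγ : f γ = γ * k ^ n)
    (hN : orbitProd f n γ * c ^ n = α ^ n) : orbitProd f n k = ξ := by
  have hβ := map_mul_hilbert90Prod_eq f hγ
  have hβn : orbitProd f n γ = (γ * hilbert90Prod f n k) ^ n := by
    rw [orbitProd_eq_of_map_eq_mul_pow f hγ, mul_pow]
  generalize γ * hilbert90Prod f n k = β at hβ hβn
  have h := hfix (β * c / α) (by rw [div_pow, mul_pow, ← hβn, hN, div_self'])
  have hx : f (β * c / α) = β * c / α * (orbitProd f n k / ξ) := by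
    rw [map_div, map_mul, hβ, hc, hα]
    simp only [div_eq_mul_inv, mul_inv]
    ac_rfl
  rw [h, left_eq_mul, div_eq_one] at hx
  exact hx

theorem exists_map_eq_mul_pow_of_orbitProd_eq {α c u : G} (hα : f α = c * α)
    (hu : orbitProd f n u = c) : ∃ γ, f γ = γ * u⁻¹ ^ n ∧ orbitProd f n γ = (α ^ n)⁻¹ := by
  have hγ : f (α⁻¹ * hilbert90Prod f n u) = α⁻¹ * hilbert90Prod f n u * u⁻¹ ^ n := by
    have h := map_hilbert90Prod_mul_pow f n u
    rw [hu] at h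
    rw [map_mul, map_inv, hα, eq_mul_inv_of_mul_eq h, inv_pow, mul_inv_rev,
      mul_right_comm _ c, mul_left_comm, inv_mul_cancel_right]
    ac_rfl
  refine ⟨_, hγ, ?_⟩
  rw [orbitProd_eq_of_map_eq_mul_pow f hγ, hilbert90Prod_inv, mul_pow, inv_pow, mul_assoc,
    ← mul_pow, mul_inv_cancel, one_pow, mul_one]

end CommGroup

namespace KummerSetup

variable {F K : Type} [Field F] [Field K] [Algebra F K]

theorem forall_mem_powers_of_apply_eq_mul [FiniteDimensional F K] [IsGalois F K] {p : ℕ}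
    [Fact p.Prime] (hdeg : Module.finrank F K = p) {ξ : F} (hξ : ξ ≠ 1) {α : K} (hα : α ≠ 0)
    {σ : K ≃ₐ[F] K} (hσ : σ α = algebraMap F K ξ * α) : ∀ τ, τ ∈ Submonoid.powers σ := by
  have hσ1 : σ ≠ 1 := by
    rintro rfl
    refine hξ ((algebraMap F K).injective ?_)
    simpa [hα] using hσ.symm
  exact fun τ => mem_powers_of_prime_card (by rw [IsGalois.card_aut_eq_finrank, hdeg]) hσ1

theorem galU_pow_apply (σ : K ≃ₐ[F] K) (i : ℕ) (x : Kˣ) :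
    galU F K (σ ^ i) x = (galU F K σ)^[i] x := by
  induction i with
  | zero => rfl
  | succ i ih => rw [Function.iterate_succ_apply', ← ih, pow_succ']; rfl

theorem galU_incU (τ : K ≃ₐ[F] K) (y : Fˣ) : galU F K τ (incU F K y) = incU F K y :=
  Units.ext (τ.commutes y)

theorem incU_injective : Function.Injective (incU F K) :=
  Units.map_injective (algebraMap F K).injective

theorem incU_normU_eq_orbitProd [FiniteDimensional F K] [IsGalois F K] {σ : K ≃ₐ[F] K}
    (hσ : ∀ τ, τ ∈ Submonoid.powers σ) (x : Kˣ) :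
    incU F K (normU F K x) = orbitProd (galU F K σ) (Module.finrank F K) x := by
  ext
  change algebraMap F K (Algebra.norm F (x : K)) = _
  rw [Algebra.norm_eq_prod_automorphisms, prod_univ_eq_prod_range_pow hσ,
    IsGalois.card_aut_eq_finrank, orbitProd, Units.coe_prod]
  exact prod_congr rfl fun i _ => by rw [← galU_pow_apply]; rfl

theorem galU_eq_self_of_pow_eq_one {p : ℕ} [NeZero p] {ξ : F} (hξ : IsPrimitiveRoot ξ p)
    (τ : K ≃ₐ[F] K) {x : Kˣ} (hx : x ^ p = 1) : galU F K τ x = x := by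
  obtain ⟨t, -, ht⟩ := (hξ.map_of_injective (algebraMap F K).injective).eq_pow_of_pow_eq_one
    (ξ := (x : K)) (by rw [← Units.val_pow_eq_pow_val, hx, Units.val_one])
  have : x = incU F K ((hξ.isUnit (NeZero.ne p)).unit ^ t) := Units.ext (by simp [incU, ← ht])
  rw [this, galU_incU]

variable (p : ℕ)

theorem mk'_powSub_eq_iff {L : Type} [Field L] (x y : Lˣ) :
    QuotientGroup.mk' (powSub p L) x = QuotientGroup.mk' (powSub p L) y ↔ ∃ z, y = x * z ^ p := by
  rw [QuotientGroup.mk'_eq_mk']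
  constructor
  · rintro ⟨_, ⟨z, rfl⟩, h⟩
    exact ⟨z, h.symm⟩
  · rintro ⟨z, h⟩
    exact ⟨z ^ p, ⟨z, rfl⟩, h.symm⟩

theorem mkJ_mem_fixedJ_iff {σ : K ≃ₐ[F] K} (hσ : ∀ τ, τ ∈ Submonoid.powers σ) (γ : Kˣ) :
    mkJ p K γ ∈ fixedJ p F K ↔ ∃ k, galU F K σ γ = γ * k ^ p := by
  constructor
  · intro h
    exact (mk'_powSub_eq_iff p _ _).1 (h σ).symm
  · rintro ⟨k, hk⟩ τ
    obtain ⟨i, rfl⟩ := hσ τ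
    refine ((mk'_powSub_eq_iff p _ _).2 ⟨orbitProd (galU F K σ) i k, ?_⟩).symm
    exact (galU_pow_apply σ i γ).trans (iterate_eq_mul_pow_orbitProd _ hk i)

end KummerSetup

theorem norm_J1_surjective_iff_general
    (p : ℕ) [Fact p.Prime] (F K : Type) [Field F] [Field K] [Algebra F K]
    (ξ : F) (hξ : IsPrimitiveRoot ξ p)
    (a : F) (ua : Fˣ) (hua : (ua : F) = a) (α : K) (hα : α ^ p = algebraMap F K a)
    [IsGalois F K] (hdeg : Module.finrank F K = p)
    (σ : K ≃ₐ[F] K) (hσ : σ α = algebraMap F K ξ * α) :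
    (∀ y ∈ Subgroup.closure {QuotientGroup.mk' (powSub p F) ua},
        ∃ x ∈ fixedJ p F K, normJ p F K x = y) ↔
      ∃ u : Kˣ, Algebra.norm F (u : K) = ξ := by
  have hp : p.Prime := Fact.out
  have : NeZero p := ⟨hp.ne_zero⟩
  have : FiniteDimensional F K := .of_finrank_pos (hdeg ▸ hp.pos)
  have hα0 : α ≠ 0 := fun h => ua.ne_zero (by simpa [h, hp.ne_zero, hua] using hα.symm)
  set uα := Units.mk0 α hα0
  set uξ := Units.mk0 ξ (hξ.ne_zero hp.ne_zero)
  have hσα : galU F K σ uα = incU F K uξ * uα := Units.ext hσ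
  have hαp : incU F K ua = uα ^ p := Units.ext (by simp [incU, uα, hua, hα])
  have hgen := forall_mem_powers_of_apply_eq_mul hdeg (hξ.ne_one hp.one_lt) hα0 hσ
  have hN : ∀ x, incU F K (normU F K x) = orbitProd (galU F K σ) p x :=
    hdeg ▸ incU_normU_eq_orbitProd hgen
  constructor
  · intro hsurj
    obtain ⟨x, hxfix, hxnorm⟩ := hsurj _ (Subgroup.subset_closure rfl)
    obtain ⟨γ, rfl⟩ := QuotientGroup.mk'_surjective _ x
    obtain ⟨k, hγk⟩ := (mkJ_mem_fixedJ_iff p hgen γ).1 hxfix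
    obtain ⟨c, hc⟩ := (mk'_powSub_eq_iff p _ _).1 hxnorm
    have hNk := orbitProd_eq_of_orbitProd_mul_pow_eq_pow _
      (fun _ => galU_eq_self_of_pow_eq_one hξ σ) hσα (galU_incU σ c) hγk
      (by rw [← hN, ← map_pow, ← map_mul, ← hc, hαp])
    have hk : normU F K k = uξ := incU_injective (by rw [hN, hNk])
    exact ⟨k, congrArg Units.val hk⟩
  · rintro ⟨u, hu⟩ y hy
    have hu : normU F K u = uξ := Units.ext hu
    obtain ⟨γ, hγ, hNγ⟩ := exists_map_eq_mul_pow_of_orbitProd_eq _ hσα (by rw [← hN, hu])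
    obtain ⟨m, rfl⟩ := Subgroup.mem_closure_singleton.1 hy
    have hγa : normU F K γ = ua⁻¹ := incU_injective (by rw [hN, hNγ, map_inv, hαp])
    refine ⟨mkJ p K γ ^ (-m), zpow_mem ((mkJ_mem_fixedJ_iff p hgen γ).2 ⟨_, hγ⟩) _, ?_⟩
    rw [map_zpow]
    change QuotientGroup.mk' _ (normU F K γ) ^ (-m) = _
    rw [hγa, map_inv, inv_zpow', neg_neg]

/-- The map `J_1 → ⟨[a]⟩ ⊆ F^×/(F^×)^p` induced by the norm is surjective if and only if
`ξ_p` is a norm from `Kˣ`. -/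
theorem norm_J1_surjective_iff
    (p : ℕ) [Fact p.Prime] (F K : Type) [Field F] [Field K] [Algebra F K]
    (hchar : (p : F) ≠ 0) (ξ : F) (hξ : IsPrimitiveRoot ξ p)
    (a : F) (ua : Fˣ) (hua : (ua : F) = a) (α : K) (hα : α ^ p = algebraMap F K a)
    (hadj : Algebra.adjoin F {α} = ⊤)
    [IsGalois F K] (hdeg : Module.finrank F K = p)
    (σ : K ≃ₐ[F] K) (hσ : σ α = algebraMap F K ξ * α) :
    (∀ y ∈ Subgroup.closure {QuotientGroup.mk' (powSub p F) ua},
        ∃ x ∈ fixedJ p F K, normJ p F K x = y) ↔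
      ∃ u : Kˣ, Algebra.norm F (u : K) = ξ :=
  norm_J1_surjective_iff_general p F K ξ hξ a ua hua α hα hdeg σ hσ
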